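/- arXiv:2510.20786 — 7 statements merged into one kernel-verified Lean document; each statement's English description precedes it below -/
import Mathlib

section
/- Let δ > 0, L₁ ≥ δ, and φ(λ) = (32δ + |λ|) · ⌈log₂(L₁/δ)⌉ / ⌈log₂(max{|λ|, 2δ}/δ)⌉. Then the map λ ↦ λ / φ(λ) is monotonically increasing on the interval [−L₁, L₁]. -/
/-!
Write `φ(λ) = (32δ + |λ|) · C / B(|λ|)` with the constant `C = ⌈log₂(L₁/δ)⌉ ≥ 0` and
`B(t) = ⌈log₂(max t (2δ) / δ)⌉`, which is nonnegative and monotone in `t`. Then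
`λ / φ(λ) = (λ / (32δ + |λ|)) · B(|λ|) / C` is an odd function, and on `λ ≥ 0` it is a
product of two nonnegative monotone factors, hence it is monotone on all of `ℝ`.
-/

open Set Real

lemma monotoneOn_div_const_add {c : ℝ} (hc : 0 < c) :
    MonotoneOn (fun t : ℝ => t / (c + t)) (Ici 0) := by
  intro s hs t ht hst
  rw [div_le_div_iff₀ (by linarith [mem_Ici.1 hs]) (by linarith [mem_Ici.1 ht])]
  nlinarith [mul_le_mul_of_nonneg_left hst hc.le]

lemma monotone_mul_div_add_abs {c : ℝ} (hc : 0 < c) {B : ℝ → ℝ} (hB : MonotoneOn B (Ici 0))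
    (hB₀ : ∀ t, 0 ≤ t → 0 ≤ B t) : Monotone fun x => x / (c + |x|) * B |x| := by
  refine monotone_of_odd_of_monotoneOn_nonneg (fun x => by simp only [abs_neg]; ring) ?_
  have hprod : MonotoneOn (fun t => t / (c + t) * B t) (Ici 0) :=
    (monotoneOn_div_const_add hc).mul hB (fun t ht => by have := mem_Ici.1 ht; positivity) hB₀
  exact hprod.congr fun t ht => by simp only [abs_of_nonneg (mem_Ici.1 ht)]

lemma ceil_logb_nonneg {b x : ℝ} (hb : 1 < b) (hx : 1 ≤ x) : 0 ≤ (⌈logb b x⌉ : ℝ) := by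
  exact_mod_cast (logb_nonneg hb hx).trans (Int.le_ceil _)

lemma monotone_ceil_logb_max_div {b a δ : ℝ} (hb : 1 < b) (ha : 0 < a) (hδ : 0 < δ) :
    Monotone fun t : ℝ => (⌈logb b (max t a / δ)⌉ : ℝ) := by
  intro s t hst
  have hlog : logb b (max s a / δ) ≤ logb b (max t a / δ) :=
    logb_le_logb_of_le hb (by positivity) (by gcongr)
  exact Int.cast_le.2 (Int.ceil_le_ceil hlog)

/-- `λ ↦ λ / φ(λ)` is monotone increasing on `[-L₁, L₁]`, where
`φ(λ) = (32δ + |λ|) · ⌈log₂(L₁/δ)⌉ / ⌈log₂(max{|λ|, 2δ}/δ)⌉`. -/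
theorem stmt1 (δ L₁ : ℝ) (hδ : 0 < δ) (hL : δ ≤ L₁) :
    MonotoneOn (fun lam : ℝ =>
      lam / ((32 * δ + |lam|) * (⌈Real.logb 2 (L₁ / δ)⌉ : ℝ) /
        (⌈Real.logb 2 (max |lam| (2 * δ) / δ)⌉ : ℝ)))
      (Set.Icc (-L₁) L₁) := by
  have hC : 0 ≤ (⌈logb 2 (L₁ / δ)⌉ : ℝ) := ceil_logb_nonneg one_lt_two ((one_le_div hδ).2 hL)
  have hB₀ (t : ℝ) : 0 ≤ (⌈logb 2 (max t (2 * δ) / δ)⌉ : ℝ) :=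
    ceil_logb_nonneg one_lt_two ((one_le_div hδ).2 (by linarith [le_max_right t (2 * δ)]))
  have hg := monotone_mul_div_add_abs (by positivity : (0 : ℝ) < 32 * δ)
    ((monotone_ceil_logb_max_div one_lt_two (by positivity) hδ).monotoneOn _) fun t _ => hB₀ t
  refine ((hg.div_const hC).monotoneOn _).congr fun lam _ => ?_
  simp only [div_div_eq_mul_div, div_mul_eq_mul_div, div_div]
end

section
/- Let δ > 0, L₁ ≥ δ, p_max = max{⌈log₂(L₁/δ)⌉, 16}, and φ(λ) = (32δ + |λ|) · ⌈log₂(L₁/δ)⌉ / ⌈log₂(max{|λ|, 2δ}/δ)⌉. For any positive integer p and any real λ with 2^p δ < |λ| ≤ 2^{p+1} δ, one has l_p < |λ|/φ(λ) ≤ r_p, where l_p = (1/p_max)·(p+1)/(1 + 2^{−(p−5)}) and r_p = (1/p_max)·(p+1)/(1 + 2^{−(p−4)}). -/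
/-!
For `2^p δ < |λ| ≤ 2^{p+1} δ` the denominator `⌈log₂(max{|λ|, 2δ}/δ)⌉` equals `p + 1`, so
`|λ|/φ(λ) = (p+1)/p_max · |λ|/(32δ + |λ|)`. Since `l_p` and `r_p` are `(p+1)/p_max` times
`1/(1 + 32/2^p)` and `1/(1 + 32/2^{p+1})`, the claim reduces to comparing `32δ/|λ|` with
`32/2^p` and `32/2^{p+1}`, which is exactly the hypothesis on `|λ|`.
-/

open Real

lemma Real.ceil_logb_eq_of_zpow_sub_one_lt_of_le {b t : ℝ} (hb : 1 < b) (n : ℤ)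
    (hlow : b ^ (n - 1) < t) (hhigh : t ≤ b ^ n) : ⌈logb b t⌉ = n := by
  have ht : 0 < t := (zpow_pos (by linarith) _).trans hlow
  rw [Int.ceil_eq_iff, logb_le_iff_le_rpow hb ht, lt_logb_iff_rpow_lt hb ht]
  rw [← Int.cast_one, ← Int.cast_sub, rpow_intCast, rpow_intCast]
  exact ⟨hlow, hhigh⟩

lemma ceil_logb_two_max_div_eq {δ x : ℝ} (hδ : 0 < δ) (p : ℕ)
    (hlow : 2 ^ p * δ < x) (hhigh : x ≤ 2 ^ (p + 1) * δ) :
    ⌈logb 2 (max x (2 * δ) / δ)⌉ = p + 1 := by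
  apply ceil_logb_eq_of_zpow_sub_one_lt_of_le one_lt_two
  · rw [add_sub_cancel_right, zpow_natCast, lt_div_iff₀ hδ]
    exact hlow.trans_le (le_max_left _ _)
  · rw [← Nat.cast_succ, zpow_natCast, div_le_iff₀ hδ]
    refine max_le hhigh ?_
    rw [mul_comm 2 δ, mul_comm _ δ]
    gcongr
    exact le_self_pow₀ one_le_two p.succ_ne_zero

lemma Real.rpow_neg_sub {b : ℝ} (hb : 0 < b) (x y : ℝ) : b ^ (-(x - y)) = b ^ y / b ^ x := by
  rw [neg_sub, rpow_sub hb]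

lemma one_div_one_add_div_lt_div_add {a P δ x : ℝ} (ha : 0 < a) (hP : 0 < P) (hδ : 0 < δ)
    (h : P * δ < x) : 1 / (1 + a / P) < x / (a * δ + x) := by
  have hx : 0 < x := (mul_pos hP hδ).trans h
  rw [div_lt_div_iff₀ (by positivity) (by positivity)]
  have : a * δ < x * (a / P) := by
    rw [mul_div_assoc', lt_div_iff₀ hP]
    nlinarith
  linarith

lemma div_add_le_one_div_one_add_div {a P δ x : ℝ} (ha : 0 < a) (hP : 0 < P) (hδ : 0 < δ)
    (hx : 0 < x) (h : x ≤ P * δ) : x / (a * δ + x) ≤ 1 / (1 + a / P) := by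
  rw [div_le_div_iff₀ (by positivity) (by positivity)]
  have : x * (a / P) ≤ a * δ := by
    rw [mul_div_assoc', div_le_iff₀ hP]
    nlinarith
  linarith

theorem stmt2_general (δ L₁ : ℝ) (hδ : 0 < δ)
    (pmax : ℕ) (hpmax : (pmax : ℤ) = ⌈Real.logb 2 (L₁ / δ)⌉) (hp16 : 16 ≤ pmax)
    (p : ℕ) (lam : ℝ)
    (hlow : 2 ^ p * δ < |lam|) (hhigh : |lam| ≤ 2 ^ (p + 1) * δ) :
    (1 / (pmax : ℝ)) * ((p : ℝ) + 1) / (1 + 2 ^ (-((p : ℝ) - 5)))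
      < |lam| / ((32 * δ + |lam|) * (⌈Real.logb 2 (L₁ / δ)⌉ : ℝ) /
          (⌈Real.logb 2 (max |lam| (2 * δ) / δ)⌉ : ℝ)) ∧
    |lam| / ((32 * δ + |lam|) * (⌈Real.logb 2 (L₁ / δ)⌉ : ℝ) /
          (⌈Real.logb 2 (max |lam| (2 * δ) / δ)⌉ : ℝ))
      ≤ (1 / (pmax : ℝ)) * ((p : ℝ) + 1) / (1 + 2 ^ (-((p : ℝ) - 4))) := by
  have hP : (0 : ℝ) < 2 ^ p := by positivity
  have hx : 0 < |lam| := (mul_pos hP hδ).trans hlow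
  have hc : (0 : ℝ) < (p + 1) / pmax := by
    have : (0 : ℝ) < pmax := by exact_mod_cast (by omega : 0 < pmax)
    positivity
  have hceil := ceil_logb_two_max_div_eq hδ p hlow hhigh
  have hratio : |lam| / ((32 * δ + |lam|) * (⌈logb 2 (L₁ / δ)⌉ : ℝ) /
      (⌈logb 2 (max |lam| (2 * δ) / δ)⌉ : ℝ)) = (p + 1) / pmax * (|lam| / (32 * δ + |lam|)) := by
    rw [hceil, ← hpmax]
    push_cast
    field_simp
  have h5 : (2 : ℝ) ^ (-((p : ℝ) - 5)) = 32 / 2 ^ p := by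
    rw [rpow_neg_sub two_pos, rpow_natCast]; norm_num
  have h4 : (2 : ℝ) ^ (-((p : ℝ) - 4)) = 32 / 2 ^ (p + 1) := by
    rw [rpow_neg_sub two_pos, rpow_natCast, pow_succ]; norm_num; ring
  rw [hratio, h5, h4]
  constructor
  · calc 1 / (pmax : ℝ) * (p + 1) / (1 + 32 / 2 ^ p)
          = (p + 1) / pmax * (1 / (1 + 32 / 2 ^ p)) := by ring
      _ < _ := mul_lt_mul_of_pos_left
          (one_div_one_add_div_lt_div_add (by norm_num) hP hδ hlow) hc
  · calc (p + 1) / pmax * (|lam| / (32 * δ + |lam|))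
          ≤ (p + 1) / pmax * (1 / (1 + 32 / 2 ^ (p + 1))) := mul_le_mul_of_nonneg_left
          (div_add_le_one_div_one_add_div (by norm_num) (by positivity) hδ hx hhigh) hc.le
      _ = _ := by ring

/-- for `2^p δ < |λ| ≤ 2^{p+1} δ` one has `l_p < |λ|/φ(λ) ≤ r_p`, where
`l_p = (1/p_max)·(p+1)/(1 + 2^{-(p-5)})`, `r_p = (1/p_max)·(p+1)/(1 + 2^{-(p-4)})`,
`p_max = ⌈log₂(L₁/δ)⌉ (= max{⌈log₂(L₁/δ)⌉, 16})`. -/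
theorem stmt2 (δ L₁ : ℝ) (hδ : 0 < δ) (hL : δ ≤ L₁)
    (pmax : ℕ) (hpmax : (pmax : ℤ) = ⌈Real.logb 2 (L₁ / δ)⌉) (hp16 : 16 ≤ pmax)
    (p : ℕ) (hp : 1 ≤ p) (lam : ℝ)
    (hlow : 2 ^ p * δ < |lam|) (hhigh : |lam| ≤ 2 ^ (p + 1) * δ) :
    (1 / (pmax : ℝ)) * ((p : ℝ) + 1) / (1 + 2 ^ (-((p : ℝ) - 5)))
      < |lam| / ((32 * δ + |lam|) * (⌈Real.logb 2 (L₁ / δ)⌉ : ℝ) /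
          (⌈Real.logb 2 (max |lam| (2 * δ) / δ)⌉ : ℝ)) ∧
    |lam| / ((32 * δ + |lam|) * (⌈Real.logb 2 (L₁ / δ)⌉ : ℝ) /
          (⌈Real.logb 2 (max |lam| (2 * δ) / δ)⌉ : ℝ))
      ≤ (1 / (pmax : ℝ)) * ((p : ℝ) + 1) / (1 + 2 ^ (-((p : ℝ) - 4))) :=
  stmt2_general δ L₁ hδ pmax hpmax hp16 p lam hlow hhigh
end

section
/- For any positive reals d, L₁, L₂, Δ, ε satisfying ε ≤ min{L₁²/L₂, Δ^{2/3} L₂^{1/3}, Δ L₂ / L₁}, it holds that min{ √(d L₂) · Δ · ε^{−3/2} + d , L₁^{1/2} L₂^{1/4} · Δ · ε^{−7/4} } ≤ √((1+√5)/2) · d^{1/4} L₁^{1/4} L₂^{3/8} · Δ · ε^{−13/8}. -/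
/-!
Write `a = √d`, `X = √L₂ Δ ε^(-3/2)` and `B = L₁^(1/2) L₂^(1/4) Δ ε^(-7/4)`. The first rate is
`a X + a²`, the right-hand side is `√(φ · a X · B)`, and the hypotheses on `ε` give `1 ≤ X` and
`B² ≤ X³`. If `φ a ≤ X`, then `a X + a² ≤ φ a X` because `φ (φ - 1) = 1`, and a minimum is at most
the geometric mean. If `X < φ a`, then `B ≤ X^(3/2) ≤ φ a X`, so `B ≤ √(φ a X B)`.
-/

open Real
open scoped goldenRatio

lemma min_le_sqrt_mul {u v : ℝ} (hu : 0 ≤ u) (hv : 0 ≤ v) : min u v ≤ √(u * v) :=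
  Real.le_sqrt_of_sq_le <| by
    rw [sq]
    exact mul_le_mul (min_le_left u v) (min_le_right u v) (le_min hu hv) hu

lemma min_mul_add_sq_le_sqrt_goldenRatio_mul {a X B : ℝ} (ha : 0 ≤ a) (hX : 1 ≤ X) (hB : 0 ≤ B)
    (hBX : B ^ 2 ≤ X ^ 3) : min (a * X + a ^ 2) B ≤ √(φ * (a * X) * B) := by
  rcases le_or_gt (φ * a) X with hφaX | hXφa
  · have hsum : a * X + a ^ 2 ≤ φ * (a * X) := by
      nlinarith [goldenRatio_sq, one_lt_goldenRatio,
        mul_le_mul_of_nonneg_left hφaX (mul_nonneg (sub_nonneg.2 one_lt_goldenRatio.le) ha)]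
    exact (min_le_min_right B hsum).trans (min_le_sqrt_mul (by positivity) hB)
  · have hB_le : B ≤ φ * (a * X) := by
      have h1 : 1 ≤ φ * a := hX.trans hXφa.le
      refine le_of_pow_le_pow_left₀ two_ne_zero (by positivity) ?_
      calc B ^ 2 ≤ X ^ 2 * X := by rw [← pow_succ]; exact hBX
        _ ≤ X ^ 2 * (φ * a) ^ 2 := by gcongr; nlinarith
        _ = (φ * (a * X)) ^ 2 := by ring
    calc min (a * X + a ^ 2) B ≤ B := min_le_right _ _
      _ = √(B * B) := (Real.sqrt_mul_self hB).symm
      _ ≤ √(φ * (a * X) * B) := Real.sqrt_le_sqrt (mul_le_mul_of_nonneg_right hB_le hB)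

lemma exists_pos_eq_pow {x : ℝ} (hx : 0 < x) {n : ℕ} (hn : n ≠ 0) : ∃ y, 0 < y ∧ x = y ^ n :=
  ⟨x ^ (n⁻¹ : ℝ), by positivity, (Real.rpow_inv_natCast_pow hx.le hn).symm⟩

lemma min_le_sqrt_goldenRatio_mul_of_eighth_roots {p q r s Δ : ℝ} (hp : 0 < p) (hr : 0 < r)
    (hs : 0 < s) (hΔ : 0 < Δ) (hX : s ^ 12 ≤ r ^ 4 * Δ) (hBX : s ^ 8 * q ^ 8 ≤ r ^ 8 * Δ) :
    min (p ^ 4 * r ^ 4 * Δ / s ^ 12 + p ^ 8) (q ^ 4 * r ^ 2 * Δ / s ^ 14)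
      ≤ √φ * (p ^ 2 * q ^ 2 * r ^ 3 * Δ / s ^ 13) := by
  have hB : (q ^ 4 * r ^ 2 * Δ / s ^ 14) ^ 2 ≤ (r ^ 4 * Δ / s ^ 12) ^ 3 := by
    rw [div_pow, div_pow, div_le_div_iff₀ (by positivity) (by positivity)]
    calc (q ^ 4 * r ^ 2 * Δ) ^ 2 * (s ^ 12) ^ 3
        = (s ^ 8 * q ^ 8) * (r ^ 4 * Δ ^ 2 * s ^ 28) := by ring
      _ ≤ (r ^ 8 * Δ) * (r ^ 4 * Δ ^ 2 * s ^ 28) := by gcongr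
      _ = (r ^ 4 * Δ) ^ 3 * (s ^ 14) ^ 2 := by ring
  have hbound := min_mul_add_sq_le_sqrt_goldenRatio_mul (pow_nonneg hp.le 4)
    ((one_le_div₀ (by positivity)).2 hX) (by positivity) hB
  rw [show φ * (p ^ 4 * (r ^ 4 * Δ / s ^ 12)) * (q ^ 4 * r ^ 2 * Δ / s ^ 14)
      = φ * (p ^ 2 * q ^ 2 * r ^ 3 * Δ / s ^ 13) ^ 2 by field_simp,
    Real.sqrt_mul goldenRatio_pos.le, Real.sqrt_sq (by positivity)] at hbound
  convert hbound using 3 <;> ring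

/-- comparison of the dimension-dependent rates of Doikov et al. / Li-Lin
with the rate of Jiang et al. -/
theorem stmt3 (d L₁ L₂ Δ ε : ℝ) (hd : 0 < d) (hL₁ : 0 < L₁) (hL₂ : 0 < L₂)
    (hΔ : 0 < Δ) (hε : 0 < ε)
    (hεle : ε ≤ min (L₁ ^ 2 / L₂) (min (Δ ^ ((2:ℝ)/3) * L₂ ^ ((1:ℝ)/3)) (Δ * L₂ / L₁))) :
    min (Real.sqrt (d * L₂) * Δ * ε ^ (-(3:ℝ)/2) + d)
        (L₁ ^ ((1:ℝ)/2) * L₂ ^ ((1:ℝ)/4) * Δ * ε ^ (-(7:ℝ)/4))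
      ≤ Real.sqrt ((1 + Real.sqrt 5) / 2) *
        (d ^ ((1:ℝ)/4) * L₁ ^ ((1:ℝ)/4) * L₂ ^ ((3:ℝ)/8) * Δ * ε ^ (-(13:ℝ)/8)) := by
  -- Eighth roots turn every real power in the statement into an integer power.
  obtain ⟨p, hp, rfl⟩ := exists_pos_eq_pow hd (n := 8) (by norm_num)
  obtain ⟨q, hq, rfl⟩ := exists_pos_eq_pow hL₁ (n := 8) (by norm_num)
  obtain ⟨r, hr, rfl⟩ := exists_pos_eq_pow hL₂ (n := 8) (by norm_num)
  obtain ⟨s, hs, rfl⟩ := exists_pos_eq_pow hε (n := 8) (by norm_num)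
  obtain ⟨-, hεΔ, hεL⟩ : _ ∧ _ ∧ _ := by simpa only [le_min_iff] using hεle
  have hX : s ^ 12 ≤ r ^ 4 * Δ := by
    have h := pow_le_pow_left₀ (by positivity) hεΔ 3
    rw [mul_pow, ← Real.rpow_mul_natCast hΔ.le, ← Real.rpow_mul_natCast (by positivity),
      ← Real.rpow_natCast_mul hr.le] at h
    norm_num at h
    exact le_of_pow_le_pow_left₀ two_ne_zero (by positivity) (by linarith)
  have hBX : s ^ 8 * q ^ 8 ≤ r ^ 8 * Δ := by
    rw [le_div_iff₀ (by positivity)] at hεL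
    linarith
  rw [show p ^ 8 * r ^ 8 = (p ^ 4 * r ^ 4) ^ 2 by ring, Real.sqrt_sq (by positivity)]
  simp only [← Real.rpow_natCast_mul hp.le, ← Real.rpow_natCast_mul hq.le,
    ← Real.rpow_natCast_mul hr.le, ← Real.rpow_natCast_mul hs.le]
  norm_num only [Real.rpow_neg hs.le, Real.rpow_ofNat]
  simpa only [div_eq_mul_inv] using
    min_le_sqrt_goldenRatio_mul_of_eighth_roots hp hr hs hΔ hX hBX
end

section
/- For every real φ > 0 and every real u with 0 ≤ u ≤ 1/φ, one has min{ (1+u)/√φ , √φ } ≤ √((1+√5)/2). -/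
/-! Let `g = (1 + √5)/2`, so `1 + g⁻¹ = g`. If `φ ≤ g` then `√φ ≤ √g`. Otherwise
`1 + u ≤ 1 + φ⁻¹ ≤ 1 + g⁻¹ = g`, and the smaller of `(1 + u)/√φ` and `√φ` is at most the
geometric mean `√(1 + u) ≤ √g` of the two. -/

open Real

theorem min_div_self_le_sqrt (a s : ℝ) : min (a / s) s ≤ √a := by
  rcases le_or_gt s √a with h | h
  · exact (min_le_right _ _).trans h
  · refine (min_le_left _ _).trans ?_
    rcases le_or_gt a 0 with ha | ha
    · exact (div_nonpos_of_nonpos_of_nonneg ha ((sqrt_nonneg a).trans h.le)).trans (sqrt_nonneg a)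
    · calc a / s ≤ a / √a := div_le_div_of_nonneg_left ha.le (sqrt_pos.mpr ha) h.le
        _ = √a := div_sqrt

theorem Real.one_add_inv_le_goldenRatio {x : ℝ} (hx : goldenRatio ≤ x) :
    1 + x⁻¹ ≤ goldenRatio := by
  calc 1 + x⁻¹ ≤ 1 + goldenRatio⁻¹ := by gcongr
    _ = goldenRatio := by rw [inv_goldenRatio, ← sub_eq_add_neg, one_sub_goldenRatio]

theorem stmt5_general (φ u : ℝ) (hu : u ≤ 1 / φ) :
    min ((1 + u) / Real.sqrt φ) (Real.sqrt φ) ≤ Real.sqrt ((1 + Real.sqrt 5) / 2) := by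
  change _ ≤ √goldenRatio
  rcases le_total φ goldenRatio with h | h
  · exact (min_le_right _ _).trans (sqrt_le_sqrt h)
  · calc min ((1 + u) / √φ) √φ ≤ √(1 + u) := min_div_self_le_sqrt _ _
      _ ≤ √goldenRatio := by
        refine sqrt_le_sqrt ?_
        calc 1 + u ≤ 1 + φ⁻¹ := by rw [← one_div]; linarith
          _ ≤ goldenRatio := one_add_inv_le_goldenRatio h

/-- for `φ > 0` and `0 ≤ u ≤ 1/φ`,
`min{(1+u)/√φ, √φ} ≤ √((1+√5)/2)`. -/
theorem stmt5 (φ u : ℝ) (hφ : 0 < φ) (hu0 : 0 ≤ u) (hu : u ≤ 1 / φ) :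
    min ((1 + u) / Real.sqrt φ) (Real.sqrt φ) ≤ Real.sqrt ((1 + Real.sqrt 5) / 2) :=
  stmt5_general φ u hu
end

section
/- Let f : ℝ^d → ℝ be twice continuously differentiable with L₂-Lipschitz Hessian, let x ∈ ℝ^d, let δ̃ > 0, and let v ∈ ℝ^d be a unit vector with vᵀ∇²f(x)v ≤ −δ̃ and ⟨v, ∇f(x)⟩ ≤ 0. Then for any R with 0 < R ≤ δ̃/L₂, f(x + Rv) − f(x) ≤ −(1/3)·δ̃·R². -/
/-! Restricted to the line `t ↦ x + t • h`, a Hessian that is `L`-Lipschitz at `x` makes the second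
derivative grow by at most `L‖h‖³ t`; integrating this twice gives the cubic Taylor bound
`f (x + h) - f x ≤ f' x h + f'' x h h / 2 + L‖h‖³ / 6`. With `h = R • v`, the first-order term is
`≤ 0`, the curvature term is `≤ -δR²/2`, and `R ≤ δ / L` caps the cubic term at `δR²/6`. -/

theorem image_le_of_hasDerivAt_le {φ ψ φ' ψ' : ℝ → ℝ} {a : ℝ} (ha : φ a ≤ ψ a)
    (hφ : ∀ t, HasDerivAt φ (φ' t) t) (hψ : ∀ t, HasDerivAt ψ (ψ' t) t)
    (hle : ∀ t, a ≤ t → φ' t ≤ ψ' t) {t : ℝ} (ht : a ≤ t) : φ t ≤ ψ t :=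
  image_le_of_deriv_right_le_deriv_boundary (b := t)
    (fun s _ ↦ (hφ s).continuousAt.continuousWithinAt)
    (fun s _ ↦ (hφ s).hasDerivWithinAt) ha
    (fun s _ ↦ (hψ s).continuousAt.continuousWithinAt)
    (fun s _ ↦ (hψ s).hasDerivWithinAt)
    (fun s hs ↦ hle s hs.1) ⟨ht, le_rfl⟩

theorem sub_le_taylor_of_deriv2_sub_le_mul {g g' g'' : ℝ → ℝ} {L : ℝ}
    (hg : ∀ t, HasDerivAt g (g' t) t) (hg' : ∀ t, HasDerivAt g' (g'' t) t)
    (hg'' : ∀ t, 0 ≤ t → g'' t - g'' 0 ≤ L * t) {t : ℝ} (ht : 0 ≤ t) :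
    g t - g 0 ≤ t * g' 0 + t ^ 2 / 2 * g'' 0 + L / 6 * t ^ 3 := by
  have hslope : ∀ s, 0 ≤ s → g' s ≤ g' 0 + s * g'' 0 + L / 2 * s ^ 2 := by
    have hψ : ∀ s, HasDerivAt (fun s ↦ g' 0 + s * g'' 0 + L / 2 * s ^ 2) (g'' 0 + L * s) s := by
      intro s
      refine ((((hasDerivAt_id' s).mul_const (g'' 0)).const_add (g' 0)).add
        ((hasDerivAt_pow 2 s).const_mul (L / 2))).congr_deriv ?_
      norm_num
      ring
    exact fun s hs ↦ image_le_of_hasDerivAt_le (by simp) hg' hψ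
      (fun u hu ↦ by linarith [hg'' u hu]) hs
  have hψ : ∀ s, HasDerivAt (fun s ↦ g 0 + s * g' 0 + s ^ 2 / 2 * g'' 0 + L / 6 * s ^ 3)
      (g' 0 + s * g'' 0 + L / 2 * s ^ 2) s := by
    intro s
    refine (((((hasDerivAt_id' s).mul_const (g' 0)).const_add (g 0)).add
      (((hasDerivAt_pow 2 s).div_const 2).mul_const (g'' 0))).add
      ((hasDerivAt_pow 3 s).const_mul (L / 6))).congr_deriv ?_
    norm_num
    ring
  linarith [image_le_of_hasDerivAt_le (by simp) hg hψ hslope ht]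

theorem ContDiff.image_add_sub_le_of_norm_fderiv_fderiv_sub_le {E : Type*}
    [NormedAddCommGroup E] [NormedSpace ℝ E] {f : E → ℝ} {L : ℝ} (hf : ContDiff ℝ 2 f) {x : E}
    (hLip : ∀ y, ‖fderiv ℝ (fderiv ℝ f) y - fderiv ℝ (fderiv ℝ f) x‖ ≤ L * ‖y - x‖) (h : E) :
    f (x + h) - f x ≤ fderiv ℝ f x h + fderiv ℝ (fderiv ℝ f) x h h / 2 + L / 6 * ‖h‖ ^ 3 := by
  set F := fderiv ℝ (fderiv ℝ f)
  have hf' : Differentiable ℝ f := hf.differentiable two_ne_zero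
  have hf'' : Differentiable ℝ (fderiv ℝ f) :=
    (hf.fderiv_right one_add_one_eq_two.le).differentiable one_ne_zero
  have hline : ∀ t : ℝ, HasDerivAt (fun t : ℝ ↦ x + t • h) h t := fun t ↦ by
    simpa using ((hasDerivAt_id t).smul_const h).const_add x
  have hg : ∀ t, HasDerivAt (fun t ↦ f (x + t • h)) (fderiv ℝ f (x + t • h) h) t :=
    fun t ↦ (hf' _).hasFDerivAt.comp_hasDerivAt t (hline t)
  have hg' : ∀ t, HasDerivAt (fun t ↦ fderiv ℝ f (x + t • h) h) (F (x + t • h) h h) t :=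
    fun t ↦ by
      simpa using ((hf'' _).hasFDerivAt.comp_hasDerivAt t (hline t)).clm_apply
        (hasDerivAt_const t h)
  have hg'' : ∀ t : ℝ, 0 ≤ t →
      F (x + t • h) h h - F (x + (0 : ℝ) • h) h h ≤ L * ‖h‖ ^ 3 * t := fun t ht ↦
    calc F (x + t • h) h h - F (x + (0 : ℝ) • h) h h = (F (x + t • h) - F x) h h := by simp
      _ ≤ ‖F (x + t • h) - F x‖ * ‖h‖ * ‖h‖ := (le_abs_self _).trans ((F _ - F x).le_opNorm₂ h h)
      _ ≤ L * ‖t • h‖ * ‖h‖ * ‖h‖ := by gcongr; simpa using hLip (x + t • h)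
      _ = L * ‖h‖ ^ 3 * t := by rw [norm_smul, Real.norm_of_nonneg ht]; ring
  have := sub_le_taylor_of_deriv2_sub_le_mul hg hg' hg'' zero_le_one
  simp only [one_smul, zero_smul, add_zero, one_mul, one_pow] at this
  linarith

theorem stmt7_general (d : ℕ) (f : EuclideanSpace ℝ (Fin d) → ℝ) (L₂ δt R : ℝ)
    (hL₂ : 0 < L₂)
    (hf : ContDiff ℝ 2 f)
    (hLip : ∀ x y : EuclideanSpace ℝ (Fin d),
      ‖fderiv ℝ (fderiv ℝ f) x - fderiv ℝ (fderiv ℝ f) y‖ ≤ L₂ * ‖x - y‖)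
    (x v : EuclideanSpace ℝ (Fin d)) (hv : ‖v‖ = 1)
    (hcurv : fderiv ℝ (fderiv ℝ f) x v v ≤ -δt)
    (hgrad : fderiv ℝ f x v ≤ 0)
    (hR0 : 0 < R) (hR : R ≤ δt / L₂) :
    f (x + R • v) - f x ≤ -(1/3) * δt * R ^ 2 := by
  have hLR : L₂ * R ≤ δt := (le_div_iff₀' hL₂).1 hR
  have htaylor := hf.image_add_sub_le_of_norm_fderiv_fderiv_sub_le (fun y ↦ hLip y x) (R • v)
  simp only [map_smul, smul_apply, smul_eq_mul, norm_smul, hv,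
    Real.norm_of_nonneg hR0.le, mul_one] at htaylor
  nlinarith [mul_nonpos_of_nonneg_of_nonpos hR0.le hgrad,
    mul_le_mul_of_nonneg_left hcurv (sq_nonneg R), mul_le_mul_of_nonneg_right hLR (sq_nonneg R)]

/-- negative-curvature descent step. -/
theorem stmt7 (d : ℕ) (f : EuclideanSpace ℝ (Fin d) → ℝ) (L₂ δt R : ℝ)
    (hL₂ : 0 < L₂) (hδ : 0 < δt)
    (hf : ContDiff ℝ 2 f)
    (hLip : ∀ x y : EuclideanSpace ℝ (Fin d),
      ‖fderiv ℝ (fderiv ℝ f) x - fderiv ℝ (fderiv ℝ f) y‖ ≤ L₂ * ‖x - y‖)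
    (x v : EuclideanSpace ℝ (Fin d)) (hv : ‖v‖ = 1)
    (hcurv : fderiv ℝ (fderiv ℝ f) x v v ≤ -δt)
    (hgrad : fderiv ℝ f x v ≤ 0)
    (hR0 : 0 < R) (hR : R ≤ δt / L₂) :
    f (x + R • v) - f x ≤ -(1/3) * δt * R ^ 2 :=
  stmt7_general d f L₂ δt R hL₂ hf hLip x v hv hcurv hgrad hR0 hR
end

section
/- Let f : ℝ^d → ℝ be twice continuously differentiable with L₂-Lipschitz Hessian, let x ∈ ℝ^d, and let Δₓ = f(x) − inf_z f(z) be finite. Let H be a symmetric d×d matrix with ‖H − ∇²f(x)‖ ≤ δ, let Π be an orthogonal projection onto an invariant subspace of H on which all eigenvalues of H have absolute value greater than ℓ, and suppose ℓ ≥ max{24 Δₓ^{1/3} L₂^{2/3}, 2δ}. Then the vector u = −(Π H Π)† ∇f(x) satisfies ‖u‖ ≤ 2√(3Δₓ/ℓ). -/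
/-!
Let `s = -(Π|H|Π)† ∇f(x)`: it has the same norm as `u`, and `σ := -⟪∇f(x), s⟫` satisfies
`ℓ‖s‖² ≤ σ` and `H(s, s) ≤ σ`. The cubic Taylor bound along `c • s`, `c ∈ [0, 1]`, together with `f ≥ f(x) - Δₓ` and `δ ≤ ℓ/2`,
gives `Δₓ ≥ (ℓ/4) r² - (L₂/2) r³` for every step length `r ≤ ‖s‖`. If `‖s‖` exceeded
`ρ = ℓ/(6L₂)`, the step length `r = ρ` would give `Δₓ ≥ ℓ³/(216 L₂²)`, contradicting
`ℓ ≥ 24 Δₓ^{1/3} L₂^{2/3}`; hence `r = ‖s‖` is admissible and yields `‖s‖² ≤ 6Δₓ/ℓ`.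
-/

open scoped RealInnerProductSpace
open Set

theorem le_add_deriv_add_half_of_deriv_deriv_le {φ φ₁ φ₂ : ℝ → ℝ} {K : ℝ}
    (hφ : ∀ t, HasDerivAt φ (φ₁ t) t) (hφ₁ : ∀ t, HasDerivAt φ₁ (φ₂ t) t)
    (hK : ∀ t ∈ Icc (0 : ℝ) 1, φ₂ t ≤ K) :
    φ 1 ≤ φ 0 + φ₁ 0 + K / 2 := by
  have antitone_of {ψ ψ' : ℝ → ℝ} (hψ : ∀ t, HasDerivAt ψ (ψ' t) t)
      (hψ' : ∀ t ∈ Icc (0 : ℝ) 1, ψ' t ≤ 0) : AntitoneOn ψ (Icc 0 1) :=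
    antitoneOn_of_hasDerivWithinAt_nonpos (convex_Icc 0 1)
      (fun t _ => (hψ t).continuousAt.continuousWithinAt)
      (fun t _ => (hψ t).hasDerivWithinAt) (fun t ht => hψ' t (interior_subset ht))
  have hφ₁_le : ∀ t ∈ Icc (0 : ℝ) 1, φ₁ t ≤ φ₁ 0 + t * K := by
    intro t ht
    have := antitone_of (fun t => ((hφ₁ t).sub_const (φ₁ 0)).fun_sub (hasDerivAt_mul_const K))
      (fun t ht => sub_nonpos.2 (hK t ht)) (left_mem_Icc.2 zero_le_one) ht ht.1
    linarith
  have := antitone_of (ψ := fun t => φ t - t * φ₁ 0 - t ^ 2 / 2 * K)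
    (ψ' := fun t => φ₁ t - φ₁ 0 - t * K)
    (fun t => by
      refine (((hφ t).fun_sub (hasDerivAt_mul_const (φ₁ 0))).fun_sub
        (((hasDerivAt_pow 2 t).div_const 2).mul_const K)).congr_deriv ?_
      push_cast
      ring)
    (fun t ht => by linarith [hφ₁_le t ht])
    (left_mem_Icc.2 zero_le_one) (right_mem_Icc.2 zero_le_one) zero_le_one
  norm_num at this
  linarith

theorem ContDiff.le_add_fderiv_add_hessian_add_cube {E : Type*} [NormedAddCommGroup E]
    [NormedSpace ℝ E] {f : E → ℝ} {L₂ : ℝ} {x : E} (hf : ContDiff ℝ 2 f)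
    (hL₂ : 0 ≤ L₂)
    (hLip : ∀ y, ‖fderiv ℝ (fderiv ℝ f) y - fderiv ℝ (fderiv ℝ f) x‖ ≤ L₂ * ‖y - x‖) (s : E) :
    f (x + s) ≤ f x + fderiv ℝ f x s + fderiv ℝ (fderiv ℝ f) x s s / 2 + L₂ / 2 * ‖s‖ ^ 3 := by
  have hline (t : ℝ) : HasDerivAt (fun t : ℝ => x + t • s) s t := by
    simpa using ((hasDerivAt_id t).smul_const s).const_add x
  have hφ (t : ℝ) : HasDerivAt (fun t => f (x + t • s)) (fderiv ℝ f (x + t • s) s) t :=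
    ((hf.differentiable two_ne_zero).differentiableAt.hasFDerivAt).comp_hasDerivAt t (hline t)
  have hφ₁ (t : ℝ) : HasDerivAt (fun t => fderiv ℝ f (x + t • s) s)
      (fderiv ℝ (fderiv ℝ f) (x + t • s) s s) t := by
    have hD : Differentiable ℝ (fderiv ℝ f) :=
      (hf.fderiv_right (m := 1) le_rfl).differentiable one_ne_zero
    simpa using (hD.differentiableAt.hasFDerivAt.comp_hasDerivAt t (hline t)).clm_apply
      (hasDerivAt_const t s)
  have hφ₂ : ∀ t ∈ Icc (0 : ℝ) 1, fderiv ℝ (fderiv ℝ f) (x + t • s) s s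
      ≤ fderiv ℝ (fderiv ℝ f) x s s + L₂ * ‖s‖ ^ 3 := by
    intro t ⟨ht₀, ht₁⟩
    have hdiff := hLip (x + t • s)
    rw [add_sub_cancel_left, norm_smul, Real.norm_of_nonneg ht₀] at hdiff
    have hbil := (le_abs_self _).trans
      ((fderiv ℝ (fderiv ℝ f) (x + t • s) - fderiv ℝ (fderiv ℝ f) x).le_opNorm₂ s s)
    simp only [sub_apply] at hbil
    have hs := norm_nonneg s
    have : L₂ * (t * ‖s‖) * ‖s‖ * ‖s‖ ≤ L₂ * ‖s‖ ^ 3 := by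
      have := mul_nonneg hL₂ (pow_nonneg hs 3)
      nlinarith
    nlinarith [mul_le_mul_of_nonneg_right hdiff (mul_nonneg hs hs)]
  have := le_add_deriv_add_half_of_deriv_deriv_le hφ hφ₁ hφ₂
  simp only [zero_smul, add_zero, one_smul] at this
  linarith

theorem abs_mul_inv_mul_sq (r a : ℝ) : |r| * (|r|⁻¹ * a) ^ 2 = |r|⁻¹ * a ^ 2 := by
  rcases eq_or_ne r 0 with rfl | hr
  · simp
  · field_simp

section NewtonStep

variable {ι E : Type*} [NormedAddCommGroup E] [InnerProductSpace ℝ E] {h : ι → E}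

theorem Orthonormal.norm_sum_smul_sq (hon : Orthonormal ℝ h) (T : Finset ι) (c : ι → ℝ) :
    ‖∑ j ∈ T, c j • h j‖ ^ 2 = ∑ j ∈ T, c j ^ 2 := by
  simpa using hon.orthogonalFamily.norm_sum c T

theorem Orthonormal.norm_sum_smul_eq (hon : Orthonormal ℝ h) (T : Finset ι) {c c' : ι → ℝ}
    (hcc' : ∀ j ∈ T, |c j| = |c' j|) :
    ‖∑ j ∈ T, c j • h j‖ = ‖∑ j ∈ T, c' j • h j‖ := by
  rw [← sq_eq_sq₀ (norm_nonneg _) (norm_nonneg _), hon.norm_sum_smul_sq, hon.norm_sum_smul_sq]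
  exact Finset.sum_congr rfl fun j hj => by rw [← sq_abs, hcc' j hj, sq_abs]

/-- The step `-(Π |H| Π)† g` for `H = ∑ⱼ λⱼ hⱼ hⱼᵀ` and `Π` the orthogonal projection onto
`span {hⱼ | j ∈ T}`. -/
noncomputable def absNewtonStep (lam : ι → ℝ) (h : ι → E) (T : Finset ι) (g : E) : E :=
  -∑ j ∈ T, (|lam j|⁻¹ * ⟪h j, g⟫) • h j

variable (lam : ι → ℝ) (T : Finset ι) (g : E)

theorem inner_absNewtonStep :
    ⟪g, absNewtonStep lam h T g⟫ = -∑ j ∈ T, |lam j|⁻¹ * ⟪h j, g⟫ ^ 2 := by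
  simp only [absNewtonStep, inner_neg_right, inner_sum, real_inner_smul_right,
    real_inner_comm g, sq, mul_assoc]

theorem Orthonormal.norm_sum_inv_smul_eq_norm_absNewtonStep (hon : Orthonormal ℝ h) :
    ‖∑ j ∈ T, ((lam j)⁻¹ * ⟪h j, g⟫) • h j‖ = ‖absNewtonStep lam h T g‖ := by
  rw [absNewtonStep, norm_neg]
  exact hon.norm_sum_smul_eq T fun j _ => by simp only [abs_mul, abs_inv, abs_abs]

theorem Orthonormal.mul_norm_absNewtonStep_sq_le (hon : Orthonormal ℝ h) {ℓ : ℝ}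
    (hℓ : ∀ j ∈ T, ℓ ≤ |lam j|) :
    ℓ * ‖absNewtonStep lam h T g‖ ^ 2 ≤ ∑ j ∈ T, |lam j|⁻¹ * ⟪h j, g⟫ ^ 2 := by
  rw [absNewtonStep, norm_neg, hon.norm_sum_smul_sq, Finset.mul_sum]
  refine Finset.sum_le_sum fun j hj => ?_
  rw [← abs_mul_inv_mul_sq]
  exact mul_le_mul_of_nonneg_right (hℓ j hj) (sq_nonneg _)

theorem Orthonormal.sum_mul_inner_absNewtonStep_le [Fintype ι] (hon : Orthonormal ℝ h) :
    ∑ j, lam j * ⟪h j, absNewtonStep lam h T g⟫ * ⟪h j, absNewtonStep lam h T g⟫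
      ≤ ∑ j ∈ T, |lam j|⁻¹ * ⟪h j, g⟫ ^ 2 := by
  classical
  have hcoord (i : ι) : ⟪h i, absNewtonStep lam h T g⟫
      = if i ∈ T then -(|lam i|⁻¹ * ⟪h i, g⟫) else 0 := by
    simp only [absNewtonStep, inner_neg_right, inner_sum, real_inner_smul_right,
      orthonormal_iff_ite.mp hon, mul_ite, mul_one, mul_zero, Finset.sum_ite_eq]
    split_ifs <;> simp
  simp only [hcoord, mul_ite, ite_mul, mul_zero, zero_mul, Finset.sum_ite_mem,
    Finset.univ_inter, Finset.inter_self]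
  refine Finset.sum_le_sum fun j _ => ?_
  rw [← abs_mul_inv_mul_sq, mul_assoc, neg_mul_neg, ← sq]
  exact mul_le_mul_of_nonneg_right (le_abs_self _) (sq_nonneg _)

end NewtonStep

theorem cubic_le_of_descent_direction {E : Type*} [NormedAddCommGroup E] [NormedSpace ℝ E]
    {f : E → ℝ} {x s : E} {L₂ ℓ σ Δ : ℝ} (hf : ContDiff ℝ 2 f) (hL₂ : 0 ≤ L₂)
    (hLip : ∀ y, ‖fderiv ℝ (fderiv ℝ f) y - fderiv ℝ (fderiv ℝ f) x‖ ≤ L₂ * ‖y - x‖)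
    (hmin : ∀ y, f x - Δ ≤ f y) (hℓ : 0 ≤ ℓ) (hslope : fderiv ℝ f x s = -σ)
    (hσ : ℓ * ‖s‖ ^ 2 ≤ σ) (hcurv : fderiv ℝ (fderiv ℝ f) x s s ≤ σ + ℓ / 2 * ‖s‖ ^ 2)
    {c : ℝ} (hc : c ∈ Icc (0 : ℝ) 1) :
    ℓ / 4 * (c * ‖s‖) ^ 2 - L₂ / 2 * (c * ‖s‖) ^ 3 ≤ Δ := by
  have htaylor := hf.le_add_fderiv_add_hessian_add_cube hL₂ hLip (c • s)
  simp only [map_smul, smul_apply, smul_eq_mul, hslope, norm_smul,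
    Real.norm_of_nonneg hc.1] at htaylor
  have hσ₀ : 0 ≤ σ := (mul_nonneg hℓ (sq_nonneg _)).trans hσ
  have hcc : c * c ≤ c := mul_le_of_le_one_left hc.1 hc.2
  nlinarith [hmin (x + c • s), mul_le_mul_of_nonneg_left hcurv (mul_self_nonneg c),
    mul_le_mul_of_nonneg_left hσ (mul_self_nonneg c), mul_le_mul_of_nonneg_right hcc hσ₀]

theorem mul_sq_le_of_cubic_le {ℓ L Δ r : ℝ} (h : ℓ / 4 * r ^ 2 - L / 2 * r ^ 3 ≤ Δ)
    (hr : L * r ≤ ℓ / 6) : ℓ / 6 * r ^ 2 ≤ Δ := by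
  nlinarith [mul_le_mul_of_nonneg_right hr (sq_nonneg r)]

theorem le_two_mul_sqrt_of_forall_cubic_le {ℓ L Δ N : ℝ} (hℓ : 0 < ℓ) (hL : 0 < L)
    (hΔ : 216 * Δ * L ^ 2 < ℓ ^ 3)
    (h : ∀ c ∈ Icc (0 : ℝ) 1, ℓ / 4 * (c * N) ^ 2 - L / 2 * (c * N) ^ 3 ≤ Δ) :
    N ≤ 2 * √(3 * Δ / ℓ) := by
  set ρ := ℓ / (6 * L) with hρ
  have hLρ : L * ρ = ℓ / 6 := by rw [hρ]; field_simp
  by_cases hNρ : N ≤ ρ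
  · have := mul_sq_le_of_cubic_le (by simpa using h 1 (right_mem_Icc.2 zero_le_one))
      (hLρ ▸ mul_le_mul_of_nonneg_left hNρ hL.le)
    suffices (N / 2) ^ 2 ≤ 3 * Δ / ℓ by linarith [Real.le_sqrt_of_sq_le this]
    rw [le_div_iff₀ hℓ]
    nlinarith [sq_nonneg N]
  · push Not at hNρ
    have hNpos : 0 < N := (div_pos hℓ (by positivity)).trans hNρ
    have hcN : ρ / N * N = ρ := div_mul_cancel₀ ρ hNpos.ne'
    have := mul_sq_le_of_cubic_le
      (hcN ▸ h (ρ / N) ⟨by positivity, (div_le_one hNpos).2 hNρ.le⟩) hLρ.le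
    have : ℓ ^ 3 ≤ 216 * Δ * L ^ 2 := by
      have hρsq : ρ ^ 2 * (36 * L ^ 2) = ℓ ^ 2 := by
        linear_combination (6 * L * ρ + ℓ) * 6 * hLρ
      nlinarith [mul_le_mul_of_nonneg_right this (sq_nonneg L)]
    linarith

theorem mul_sq_le_cube_of_rpow_le {ℓ L Δ : ℝ} (hΔ : 0 ≤ Δ) (hL : 0 ≤ L)
    (h : 24 * Δ ^ ((1 : ℝ) / 3) * L ^ ((2 : ℝ) / 3) ≤ ℓ) : 13824 * Δ * L ^ 2 ≤ ℓ ^ 3 := by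
  have hcube := pow_le_pow_left₀ (by positivity) h 3
  rw [mul_pow, mul_pow, ← Real.rpow_mul_natCast hΔ, ← Real.rpow_mul_natCast hL] at hcube
  norm_num at hcube
  linarith

theorem stmt8_general (d : ℕ) (f : EuclideanSpace ℝ (Fin d) → ℝ) (L₂ δ ℓ Δx : ℝ)
    (hL₂ : 0 < L₂) (hℓpos : 0 < ℓ)
    (hf : ContDiff ℝ 2 f)
    (hLip : ∀ x y : EuclideanSpace ℝ (Fin d),
      ‖fderiv ℝ (fderiv ℝ f) x - fderiv ℝ (fderiv ℝ f) y‖ ≤ L₂ * ‖x - y‖)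
    (x : EuclideanSpace ℝ (Fin d))
    (hbdd : BddBelow (Set.range f))
    (hΔx : Δx = f x - ⨅ z, f z)
    (lam : Fin d → ℝ) (h : Fin d → EuclideanSpace ℝ (Fin d)) (hon : Orthonormal ℝ h)
    (hH : ∀ v w : EuclideanSpace ℝ (Fin d),
      |(∑ j, lam j * ⟪h j, v⟫ * ⟪h j, w⟫) - fderiv ℝ (fderiv ℝ f) x v w|
        ≤ δ * ‖v‖ * ‖w‖)
    (hℓ : max (24 * Δx ^ ((1:ℝ)/3) * L₂ ^ ((2:ℝ)/3)) (2 * δ) ≤ ℓ)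
    (u : EuclideanSpace ℝ (Fin d))
    (hu : u = -∑ j ∈ Finset.univ.filter (fun j => ℓ < |lam j|),
        ((lam j)⁻¹ * ⟪h j, gradient f x⟫) • h j) :
    ‖u‖ ≤ 2 * Real.sqrt (3 * Δx / ℓ) := by
  set T := Finset.univ.filter (fun j => ℓ < |lam j|)
  set s := absNewtonStep lam h T (gradient f x)
  have hmin (y : EuclideanSpace ℝ (Fin d)) : f x - Δx ≤ f y := by
    linarith [ciInf_le hbdd y]
  have hσ := hon.mul_norm_absNewtonStep_sq_le lam T (gradient f x)
    fun j hj => (Finset.mem_filter.1 hj).2.le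
  have hcurv : fderiv ℝ (fderiv ℝ f) x s s
      ≤ ∑ j ∈ T, |lam j|⁻¹ * ⟪h j, gradient f x⟫ ^ 2 + ℓ / 2 * ‖s‖ ^ 2 := by
    have := hon.sum_mul_inner_absNewtonStep_le lam T (gradient f x)
    nlinarith [(abs_le.1 (hH s s)).1, le_max_right _ _ |>.trans hℓ, sq_nonneg ‖s‖]
  have hcube :=
    mul_sq_le_cube_of_rpow_le (by linarith [hmin x]) hL₂.le (le_max_left _ _ |>.trans hℓ)
  rw [hu, norm_neg, hon.norm_sum_inv_smul_eq_norm_absNewtonStep]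
  refine le_two_mul_sqrt_of_forall_cubic_le hℓpos hL₂ (by linarith [pow_pos hℓpos 3])
    fun c hc => cubic_le_of_descent_direction hf hL₂.le (fun y => hLip y x) hmin hℓpos.le ?_
      hσ hcurv hc
  rw [← inner_gradient_left, inner_absNewtonStep]

/-- the restricted Newton step `u = -(Π H Π)† ∇f(x)` (with `H = Σ λⱼ hⱼhⱼᵀ`
`δ`-close to the Hessian, `Π` the projection onto eigenvectors with `|λⱼ| > ℓ`, so that
`(ΠHΠ)†∇f(x) = Σ_{|λⱼ|>ℓ} λⱼ⁻¹ ⟪hⱼ, ∇f(x)⟫ hⱼ`) satisfies `‖u‖ ≤ 2√(3Δₓ/ℓ)`. -/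
theorem stmt8 (d : ℕ) (f : EuclideanSpace ℝ (Fin d) → ℝ) (L₂ δ ℓ Δx : ℝ)
    (hL₂ : 0 < L₂) (hδ : 0 ≤ δ) (hℓpos : 0 < ℓ)
    (hf : ContDiff ℝ 2 f)
    (hLip : ∀ x y : EuclideanSpace ℝ (Fin d),
      ‖fderiv ℝ (fderiv ℝ f) x - fderiv ℝ (fderiv ℝ f) y‖ ≤ L₂ * ‖x - y‖)
    (x : EuclideanSpace ℝ (Fin d))
    (hbdd : BddBelow (Set.range f))
    (hΔx : Δx = f x - ⨅ z, f z)
    (lam : Fin d → ℝ) (h : Fin d → EuclideanSpace ℝ (Fin d)) (hon : Orthonormal ℝ h)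
    (hH : ∀ v w : EuclideanSpace ℝ (Fin d),
      |(∑ j, lam j * ⟪h j, v⟫ * ⟪h j, w⟫) - fderiv ℝ (fderiv ℝ f) x v w|
        ≤ δ * ‖v‖ * ‖w‖)
    (hℓ : max (24 * Δx ^ ((1:ℝ)/3) * L₂ ^ ((2:ℝ)/3)) (2 * δ) ≤ ℓ)
    (u : EuclideanSpace ℝ (Fin d))
    (hu : u = -∑ j ∈ Finset.univ.filter (fun j => ℓ < |lam j|),
        ((lam j)⁻¹ * ⟪h j, gradient f x⟫) • h j) :
    ‖u‖ ≤ 2 * Real.sqrt (3 * Δx / ℓ) :=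
  stmt8_general d f L₂ δ ℓ Δx hL₂ hℓpos hf hLip x hbdd hΔx lam h hon hH hℓ u hu
end

section
/- Let Ā ∈ ℝ^{d×d} be symmetric with Ā ⪯ I, let 0 < η ≤ 1/4 and 0 < θ ≤ 1, and let g(x) = ⟨c, x⟩ + ½ xᵀ Ā x be a quadratic function restricted to a subspace on which Ā ⪰ −(θ/η)·I. Consider iterates x^(k+1) = y^(k) − η(Āy^(k) + c + ι^(k)) with y^(k) = x^(k) + (1−θ)(x^(k) − x^(k−1)). Then for any α > 0: g(x^(k+1)) − g(x^(k)) ≤ −½(x^(k) − y^(k))ᵀĀ(x^(k) − y^(k)) + ‖ι^(k)‖²/(2α) + (1/(2η))·( ‖x^(k) − y^(k)‖² − (1 − αη)·‖x^(k+1) − x^(k)‖² ). -/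
/-!
A quadratic is its own second-order Taylor expansion, so around `y` one has exactly
`g(x⁺) - g(x) = ⟪∇g(y), x⁺ - x⟫ + ½⟪x⁺ - y, Ā(x⁺ - y)⟫ - ½⟪x - y, Ā(x - y)⟫`.
The update rule reads `∇g(y) = -(x⁺ - y)/η - ι`; the three-point identity turns
`⟪x⁺ - y, x⁺ - x⟫` into squared norms, Young's inequality absorbs `ι`, and `Ā ⪯ I`, `η ≤ 1`
bound the curvature term at `x⁺ - y` by `‖x⁺ - y‖²/(2η)`, which then cancels.
-/

open scoped RealInnerProductSpace

section

variable {E : Type*} [NormedAddCommGroup E] [InnerProductSpace ℝ E]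

theorem LinearMap.IsSymmetric.quadratic_eq_taylor {A : E →ₗ[ℝ] E} (hA : A.IsSymmetric)
    (c y z : E) :
    ⟪c, z⟫ + (1/2) * ⟪z, A z⟫
      = ⟪c, y⟫ + (1/2) * ⟪y, A y⟫ + ⟪c + A y, z - y⟫ + (1/2) * ⟪z - y, A (z - y)⟫ := by
  obtain ⟨h, rfl⟩ : ∃ h, z = y + h := ⟨z - y, by abel⟩
  have hyh : ⟪y, A h⟫ = ⟪A y, h⟫ := (hA y h).symm
  simp only [add_sub_cancel_left, map_add, inner_add_left, inner_add_right, hyh,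
    real_inner_comm h (A y)]
  ring

theorem LinearMap.IsSymmetric.quadratic_sub_quadratic {A : E →ₗ[ℝ] E} (hA : A.IsSymmetric)
    (c x y z : E) :
    (⟪c, z⟫ + (1/2) * ⟪z, A z⟫) - (⟪c, x⟫ + (1/2) * ⟪x, A x⟫)
      = ⟪c + A y, z - x⟫ + (1/2) * ⟪z - y, A (z - y)⟫ - (1/2) * ⟪x - y, A (x - y)⟫ := by
  rw [hA.quadratic_eq_taylor c y z, hA.quadratic_eq_taylor c y x, ← sub_sub_sub_cancel_right z x y,
    inner_sub_right (c + A y) (z - y)]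
  ring

theorem two_mul_real_inner_sub_sub (a b c : E) :
    2 * ⟪a - b, a - c⟫ = ‖a - b‖ ^ 2 + ‖a - c‖ ^ 2 - ‖c - b‖ ^ 2 := by
  rw [← sub_sub_sub_cancel_left b c a, norm_sub_sq_real (a - b) (a - c)]
  ring

theorem real_inner_le_norm_sq_div_add {α : ℝ} (hα : 0 < α) (u v : E) :
    ⟪u, v⟫ ≤ ‖u‖ ^ 2 / (2 * α) + α / 2 * ‖v‖ ^ 2 := by
  have hsq : 0 ≤ (‖u‖ - α * ‖v‖) ^ 2 / (2 * α) := by positivity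
  have hexp : (‖u‖ - α * ‖v‖) ^ 2 / (2 * α)
      = ‖u‖ ^ 2 / (2 * α) + α / 2 * ‖v‖ ^ 2 - ‖u‖ * ‖v‖ := by
    field_simp; ring
  linarith [real_inner_le_norm u v]

end

theorem stmt16_general (n : ℕ) (η α : ℝ)
    (hη0 : 0 < η) (hη : η ≤ 1/4) (hα : 0 < α)
    (Ab : EuclideanSpace ℝ (Fin n) →L[ℝ] EuclideanSpace ℝ (Fin n))
    (hsym : ∀ v w, ⟪Ab v, w⟫ = ⟪v, Ab w⟫)
    (hub : ∀ v, ⟪v, Ab v⟫ ≤ ‖v‖ ^ 2)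
    (c ι xk y xnext : EuclideanSpace ℝ (Fin n))
    (hnext : xnext = y - η • (Ab y + c + ι)) :
    (⟪c, xnext⟫ + (1/2) * ⟪xnext, Ab xnext⟫) - (⟪c, xk⟫ + (1/2) * ⟪xk, Ab xk⟫)
      ≤ -(1/2) * ⟪xk - y, Ab (xk - y)⟫ + ‖ι‖ ^ 2 / (2 * α)
        + (1 / (2 * η)) * (‖xk - y‖ ^ 2 - (1 - α * η) * ‖xnext - xk‖ ^ 2) := by
  have hgrad : c + Ab y = -η⁻¹ • (xnext - y) - ι := by
    rw [hnext]
    match_scalars <;> field_simp <;> ring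
  have hcurv : ⟪xnext - y, Ab (xnext - y)⟫ ≤ ‖xnext - y‖ ^ 2 / η :=
    (hub _).trans (le_div_self (sq_nonneg _) hη0 (by linarith))
  have hyoung := real_inner_le_norm_sq_div_add hα (-ι) (xnext - xk)
  rw [norm_neg, inner_neg_left] at hyoung
  have hA : (Ab : EuclideanSpace ℝ (Fin n) →ₗ[ℝ] _).IsSymmetric := hsym
  have hsplit := hA.quadratic_sub_quadratic c xk y xnext
  simp only [ContinuousLinearMap.coe_coe] at hsplit
  rw [hsplit, hgrad, inner_sub_left, real_inner_smul_left]
  linear_combination (-η⁻¹ / 2) * two_mul_real_inner_sub_sub xnext y xk + hyoung + (1/2) * hcurv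
    + (-α / 2 * ‖xnext - xk‖ ^ 2) * mul_inv_cancel₀ hη0.ne'

/-- Euclidean version of Lemma '01-quadratic-decomposition': one-step
inequality for the AGD update on the quadratic `g(x) = ⟪c, x⟫ + ½⟪x, Āx⟫`. -/
theorem stmt16 (n : ℕ) (η θ α : ℝ)
    (hη0 : 0 < η) (hη : η ≤ 1/4) (hθ0 : 0 < θ) (hθ1 : θ ≤ 1) (hα : 0 < α)
    (Ab : EuclideanSpace ℝ (Fin n) →L[ℝ] EuclideanSpace ℝ (Fin n))
    (hsym : ∀ v w, ⟪Ab v, w⟫ = ⟪v, Ab w⟫)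
    (hub : ∀ v, ⟪v, Ab v⟫ ≤ ‖v‖ ^ 2)
    (hlb : ∀ v, -(θ / η) * ‖v‖ ^ 2 ≤ ⟪v, Ab v⟫)
    (c ι xk xkm1 y xnext : EuclideanSpace ℝ (Fin n))
    (hy : y = xk + (1 - θ) • (xk - xkm1))
    (hnext : xnext = y - η • (Ab y + c + ι)) :
    (⟪c, xnext⟫ + (1/2) * ⟪xnext, Ab xnext⟫) - (⟪c, xk⟫ + (1/2) * ⟪xk, Ab xk⟫)
      ≤ -(1/2) * ⟪xk - y, Ab (xk - y)⟫ + ‖ι‖ ^ 2 / (2 * α)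
        + (1 / (2 * η)) * (‖xk - y‖ ^ 2 - (1 - α * η) * ‖xnext - xk‖ ^ 2) :=
  stmt16_general n η α hη0 hη hα Ab hsym hub c ι xk y xnext hnext
end
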